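/- Let H be a reproducing kernel Hilbert space on a set X with reproducing kernel k, and let X_N = {x_1, ..., x_N} ⊆ X and y_1, ..., y_N ∈ ℝ. If a minimizer f* of f ↦ ∑_{i=1}^N (f(x_i) − y_i)² + λ‖f‖_H² over H exists (λ > 0), then f* lies in the span of {k(·, x_1), ..., k(·, x_N)}, i.e., f* = ∑_{j=1}^N α_j k(·, x_j) for some coefficients α_j ∈ ℝ. -/

import Mathlib

/-!
Project a minimizer `f` orthogonally onto `S = span {K x₁, …, K x_N}`. The projection has the same
inner products with every `K xᵢ`, hence the same data-fit term, while Pythagoras gives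
`‖f‖² = ‖P f‖² + ‖P^⊥ f‖²`. Minimality of `f` and `λ > 0` then force `P^⊥ f = 0`, i.e. `f ∈ S`.
-/

namespace Submodule

variable {E : Type*} [NormedAddCommGroup E] [InnerProductSpace ℝ E]

theorem inner_starProjection_left_of_mem (K : Submodule ℝ E) [K.HasOrthogonalProjection]
    (u : E) {v : E} (hv : v ∈ K) : inner ℝ (K.starProjection u) v = inner ℝ u v :=
  inner_orthogonalProjectionOnto_eq_of_mem_right (K := K) ⟨v, hv⟩ u

theorem mem_of_forall_le_add_mul_norm_sq {K : Submodule ℝ E} [K.HasOrthogonalProjection]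
    {F : E → ℝ} (hF : ∀ g, F (K.starProjection g) = F g) {lam : ℝ} (hlam : 0 < lam) {f : E}
    (hmin : ∀ g, F f + lam * ‖f‖ ^ 2 ≤ F g + lam * ‖g‖ ^ 2) : f ∈ K := by
  have hle : lam * ‖f‖ ^ 2 ≤ lam * ‖K.starProjection f‖ ^ 2 := by
    simpa [hF f] using hmin (K.starProjection f)
  have hperp : ‖Kᗮ.starProjection f‖ ^ 2 ≤ 0 := by
    linarith [(mul_le_mul_iff_of_pos_left hlam).1 hle, norm_sq_eq_add_norm_sq_starProjection f K]
  have hzero : Kᗮ.starProjection f = 0 :=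
    norm_eq_zero.1 (pow_eq_zero_iff two_ne_zero |>.1 (le_antisymm hperp (sq_nonneg _)))
  rwa [← starProjection_eq_self_iff, eq_comm, ← sub_eq_zero, ← starProjection_orthogonal_val]

end Submodule

theorem representer_theorem_general {X : Type*} {H : Type*} [NormedAddCommGroup H]
    [InnerProductSpace ℝ H]
    (K : X → H)
    (N : ℕ) (x : Fin N → X) (y : Fin N → ℝ)
    (lam : ℝ) (hlam : 0 < lam)
    (fstar : H)
    (hmin : ∀ g : H,
      (∑ i, ((inner ℝ fstar (K (x i)) : ℝ) - y i) ^ 2) + lam * ‖fstar‖ ^ 2 ≤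
      (∑ i, ((inner ℝ g (K (x i)) : ℝ) - y i) ^ 2) + lam * ‖g‖ ^ 2) :
    fstar ∈ Submodule.span ℝ (Set.range fun i => K (x i)) := by
  have := FiniteDimensional.span_of_finite ℝ (Set.finite_range fun i => K (x i))
  refine Submodule.mem_of_forall_le_add_mul_norm_sq
    (F := fun g => ∑ i, ((inner ℝ g (K (x i)) : ℝ) - y i) ^ 2) (fun g => ?_) hlam hmin
  simp only [Submodule.inner_starProjection_left_of_mem _ _ (Submodule.subset_span (Set.mem_range_self _))]

/-- Representer theorem: in an RKHS `H` on `X` with kernel `k` and canonical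
feature map `K x = k(·, x)` (so that the reproducing property reads
`f(x) = ⟪f, K x⟫`), any minimizer of the regularized least-squares functional
`f ↦ ∑ i, (f (x i) − y i)² + λ ‖f‖²` lies in the span of `{k(·, x₁), …, k(·, x_N)}`. -/
theorem representer_theorem {X : Type*} {H : Type*} [NormedAddCommGroup H]
    [InnerProductSpace ℝ H] [CompleteSpace H]
    (k : X → X → ℝ) (K : X → H)
    (hk : ∀ x z : X, k x z = (inner ℝ (K x) (K z) : ℝ))
    (N : ℕ) (x : Fin N → X) (y : Fin N → ℝ)
    (lam : ℝ) (hlam : 0 < lam)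
    (fstar : H)
    (hmin : ∀ g : H,
      (∑ i, ((inner ℝ fstar (K (x i)) : ℝ) - y i) ^ 2) + lam * ‖fstar‖ ^ 2 ≤
      (∑ i, ((inner ℝ g (K (x i)) : ℝ) - y i) ^ 2) + lam * ‖g‖ ^ 2) :
    fstar ∈ Submodule.span ℝ (Set.range fun i => K (x i)) :=
  representer_theorem_general K N x y lam hlam fstar hmin
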